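/- arXiv:0708.3114 — 2 statements merged into one kernel-verified Lean document; each statement's English description precedes it below -/
import Mathlib

section
/- Let X be a smooth manifold, H a closed 3-form on X, {U_i} an open cover with even-form cocycle {ω̄_{ij}} as above, and let {ρ_i}, {ρ'_i} be two partitions of unity subordinate to the cover. Then the resulting global odd forms Θ and Θ' (built from η_i = Σ_k ρ_k ω̄_{ki} and η'_i = Σ_k ρ'_k ω̄_{ki}) differ by a (d − H)-exact form: Θ − Θ' = (d − H)η where η = Σ_k (ρ_k − ρ'_k) ω̄_{ki} is a globally well-defined even form. -/
/-!
On `U i ∩ U j` the cocycle identity gives `ω̄_{ki} = ω̄_{kj} - ω̄_{ij}` wherever `ρ_k - ρ'_k ≠ 0`,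
and the coefficients `ρ_k - ρ'_k` sum to `1 - 1 = 0`, so the term `ω̄_{ij}` drops out of
`Σ_k (ρ_k - ρ'_k) ω̄_{ki}`: the local forms agree on overlaps and glue to a global `η`.
On `U i` the difference `η_i - η'_i` of the two local primitives is `η`, and since `d` is local,
`Θ - Θ' = (d - H)(η_i - η'_i) = (d - H)η` there.
-/

open Function

section Finsum

variable {ι R M : Type*} [Ring R] [AddCommGroup M] [Module R M]

lemma finsum_smul_sub_finsum_smul {f g : ι → R} (hf : f.HasFiniteSupport)
    (hg : g.HasFiniteSupport) (a : ι → M) :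
    ∑ᶠ k, f k • a k - ∑ᶠ k, g k • a k = ∑ᶠ k, (f k - g k) • a k := by
  rw [← finsum_sub_distrib (f := fun k => f k • a k) (g := fun k => g k • a k)
    (hf.smul_left a) (hg.smul_left a)]
  exact finsum_congr fun k => (sub_smul _ _ _).symm

lemma finsum_smul_eq_of_forall_eq_sub {c : ι → R} (hc : c.HasFiniteSupport)
    (hc₀ : ∑ᶠ k, c k = 0) {a b : ι → M} (e : M) (hab : ∀ k, c k ≠ 0 → a k = b k - e) :
    ∑ᶠ k, c k • a k = ∑ᶠ k, c k • b k := by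
  have hterm : ∀ k, c k • a k = c k • b k - c k • e := fun k => by
    by_cases hk : c k = 0
    · simp [hk]
    · rw [hab k hk, smul_sub]
  rw [finsum_congr hterm, finsum_sub_distrib (f := fun k => c k • b k) (g := fun k => c k • e)
    (hc.smul_left b) (hc.smul_left fun _ => e),
    ← finsum_smul' hc, hc₀, zero_smul, sub_zero]

end Finsum

lemma exists_eq_of_agree_on_inter {ι X β : Type*} {U : ι → Set X} (hcover : ∀ x, ∃ i, x ∈ U i)
    (f : ι → X → β) (hagree : ∀ i j x, x ∈ U i → x ∈ U j → f i x = f j x) :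
    ∃ g : X → β, ∀ i, ∀ x ∈ U i, g x = f i x :=
  ⟨fun x => f (hcover x).choose x, fun i x hx => hagree _ i x (hcover x).choose_spec hx⟩

section Twisted

variable {X R V : Type*} [TopologicalSpace X] [Semiring R] [Ring V] [Module R V]

def IsLocalOperator (d : (X → V) →ₗ[R] (X → V)) : Prop :=
  ∀ (f g : X → V) (s : Set X), IsOpen s → (∀ x ∈ s, f x = g x) → ∀ x ∈ s, d f x = d g x

lemma IsLocalOperator.twisted_sub_eq {d : (X → V) →ₗ[R] (X → V)} (hd : IsLocalOperator d)
    (H : X → V) {s : Set X} (hs : IsOpen s) {F F' η : X → V}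
    (hη : ∀ y ∈ s, F y - F' y = η y) {x : X} (hx : x ∈ s) :
    (d F x - H x * F x) - (d F' x - H x * F' x) = d η x - H x * η x := by
  have hdη : d F x - d F' x = d η x := by
    rw [← Pi.sub_apply, ← map_sub]
    exact hd (F - F') η s hs hη x hx
  rw [← hdη, ← hη x hx, mul_sub]
  abel

end Twisted

theorem twisted_theta_partition_of_unity_dependence_general
    {ι X : Type*} {V : Type*} [Ring V] [Algebra ℝ V]
    [TopologicalSpace X]
    (U : ι → Set X) (hUopen : ∀ i, IsOpen (U i)) (hcover : ∀ x, ∃ i, x ∈ U i)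
    (d : (X → V) →ₗ[ℝ] (X → V))
    (H : X → V)
    (hloc : ∀ (f g : X → V) (s : Set X), IsOpen s → (∀ x ∈ s, f x = g x) →
      ∀ x ∈ s, d f x = d g x)
    (ω : ι → ι → X → V)
    (hcocycle : ∀ i j k, ∀ x, x ∈ U i → x ∈ U j → x ∈ U k →
      ω j k x - ω i k x + ω i j x = 0)
    (ρ ρ' : ι → X → ℝ)
    (hfin : ∀ x, (Function.support fun k => ρ k x).Finite)
    (hfin' : ∀ x, (Function.support fun k => ρ' k x).Finite)
    (hsum : ∀ x, ∑ᶠ k, ρ k x = 1) (hsum' : ∀ x, ∑ᶠ k, ρ' k x = 1)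
    (hsupp : ∀ k x, ρ k x ≠ 0 → x ∈ U k) (hsupp' : ∀ k x, ρ' k x ≠ 0 → x ∈ U k)
    (Θ Θ' : X → V)
    (hΘ : ∀ i, ∀ x ∈ U i,
      Θ x = d (fun y => ∑ᶠ k, ρ k y • ω k i y) x
              - H x * (∑ᶠ k, ρ k x • ω k i x))
    (hΘ' : ∀ i, ∀ x ∈ U i,
      Θ' x = d (fun y => ∑ᶠ k, ρ' k y • ω k i y) x
              - H x * (∑ᶠ k, ρ' k x • ω k i x)) :
    (∀ i j, ∀ x, x ∈ U i → x ∈ U j →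
      (∑ᶠ k, (ρ k x - ρ' k x) • ω k i x) = ∑ᶠ k, (ρ k x - ρ' k x) • ω k j x) ∧
    ∃ η : X → V,
      (∀ i, ∀ x ∈ U i, η x = ∑ᶠ k, (ρ k x - ρ' k x) • ω k i x) ∧
      (∀ x, Θ x - Θ' x = d η x - H x * η x) := by
  have hmem : ∀ k x, ρ k x - ρ' k x ≠ 0 → x ∈ U k := fun k x h => by
    by_cases hρ : ρ k x = 0
    · exact hsupp' k x fun hρ' => h (by rw [hρ, hρ', sub_zero])
    · exact hsupp k x hρ
  have hfin_sub : ∀ x, HasFiniteSupport fun k => ρ k x - ρ' k x :=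
    fun x => HasFiniteSupport.fun_sub (hfin x) (hfin' x)
  have hsum_sub : ∀ x, ∑ᶠ k, (ρ k x - ρ' k x) = 0 := fun x => by
    rw [finsum_sub_distrib (hfin x) (hfin' x), hsum, hsum', sub_self]
  have hagree : ∀ i j, ∀ x, x ∈ U i → x ∈ U j →
      (∑ᶠ k, (ρ k x - ρ' k x) • ω k i x) = ∑ᶠ k, (ρ k x - ρ' k x) • ω k j x :=
    fun i j x hi hj => finsum_smul_eq_of_forall_eq_sub (hfin_sub x) (hsum_sub x) (ω i j x)
      fun k hk => by
        rw [eq_sub_iff_add_eq, ← sub_eq_zero, ← hcocycle k i j x (hmem k x hk) hi hj]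
        abel
  obtain ⟨η, hη⟩ := exists_eq_of_agree_on_inter hcover _ hagree
  refine ⟨hagree, η, hη, fun x => ?_⟩
  obtain ⟨i, hi⟩ := hcover x
  rw [hΘ i x hi, hΘ' i x hi]
  exact IsLocalOperator.twisted_sub_eq hloc H (hUopen i) (fun y hy => by
    rw [finsum_smul_sub_finsum_smul (hfin y) (hfin' y), hη i y hy]) hi

/-- Dependence of the glued twisted form `Θ` on the partition of
unity.  In the setting of the twisted Čech–de Rham diagram chase (forms modelled as
functions into an `ℝ`-algebra `V`, `d` a local `ℝ`-linear differential, `H` a closed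
3-form), let `Θ` and `Θ'` be the global odd forms built from the `(d-H)`-closed
cocycle `ω̄_{ij}` using two partitions of unity `{ρ_i}` and `{ρ'_i}`, i.e.
`Θ|_{U_i} = (d-H)η_i` with `η_i = Σ_k ρ_k ω̄_{ki}`, and similarly for `Θ'`.  Then the
local even forms `Σ_k (ρ_k - ρ'_k) ω̄_{ki}` are independent of `i` on overlaps, hence
glue to a global even form `η`, and `Θ - Θ' = (d - H) η`. -/
theorem twisted_theta_partition_of_unity_dependence
    {ι X : Type*} {V : Type*} [Ring V] [Algebra ℝ V]
    [TopologicalSpace X]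
    (U : ι → Set X) (hUopen : ∀ i, IsOpen (U i)) (hcover : ∀ x, ∃ i, x ∈ U i)
    (d : (X → V) →ₗ[ℝ] (X → V))
    (H : X → V)
    (hloc : ∀ (f g : X → V) (s : Set X), IsOpen s → (∀ x ∈ s, f x = g x) →
      ∀ x ∈ s, d f x = d g x)
    (hd2 : ∀ (f : X → V) (x : X), d (d f) x = 0)
    (hdH : ∀ x, d H x = 0)
    (hH2 : ∀ x, H x * H x = 0)
    (hLeib : ∀ (f : X → V) (x : X),
      d (fun y => H y * f y) x = d H x * f x - H x * d f x)
    (ω : ι → ι → X → V)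
    (hcocycle : ∀ i j k, ∀ x, x ∈ U i → x ∈ U j → x ∈ U k →
      ω j k x - ω i k x + ω i j x = 0)
    (hclosed : ∀ i j, ∀ x, x ∈ U i → x ∈ U j →
      d (ω i j) x - H x * ω i j x = 0)
    (ρ ρ' : ι → X → ℝ)
    (hfin : ∀ x, (Function.support fun k => ρ k x).Finite)
    (hfin' : ∀ x, (Function.support fun k => ρ' k x).Finite)
    (hnonneg : ∀ k x, 0 ≤ ρ k x) (hnonneg' : ∀ k x, 0 ≤ ρ' k x)
    (hsum : ∀ x, ∑ᶠ k, ρ k x = 1) (hsum' : ∀ x, ∑ᶠ k, ρ' k x = 1)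
    (hsupp : ∀ k x, ρ k x ≠ 0 → x ∈ U k) (hsupp' : ∀ k x, ρ' k x ≠ 0 → x ∈ U k)
    (Θ Θ' : X → V)
    (hΘ : ∀ i, ∀ x ∈ U i,
      Θ x = d (fun y => ∑ᶠ k, ρ k y • ω k i y) x
              - H x * (∑ᶠ k, ρ k x • ω k i x))
    (hΘ' : ∀ i, ∀ x ∈ U i,
      Θ' x = d (fun y => ∑ᶠ k, ρ' k y • ω k i y) x
              - H x * (∑ᶠ k, ρ' k x • ω k i x)) :
    (∀ i j, ∀ x, x ∈ U i → x ∈ U j →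
      (∑ᶠ k, (ρ k x - ρ' k x) • ω k i x) = ∑ᶠ k, (ρ k x - ρ' k x) • ω k j x) ∧
    ∃ η : X → V,
      (∀ i, ∀ x ∈ U i, η x = ∑ᶠ k, (ρ k x - ρ' k x) • ω k i x) ∧
      (∀ x, Θ x - Θ' x = d η x - H x * η x) :=
  twisted_theta_partition_of_unity_dependence_general U hUopen hcover d H hloc ω hcocycle ρ ρ' hfin
    hfin' hsum hsum' hsupp hsupp' Θ Θ' hΘ hΘ'
end

section
/- Let H be a Hilbert space, {U_i} an open cover of a space X, ĝ_{ij} : U_{ij} → U(H) continuous maps, and P_{ij} : U_{ij} → B(H) continuous families of finite-rank orthogonal projections satisfying the twisted cocycle relation ĝ_{jk}^{-1} P_{ij} ĝ_{jk} + P_{jk} = P_{ik} on U_{ijk}, where projections with equal second index commute pointwise. Given a partition of unity {ρ_j} subordinate to {U_i}, define g_i(x) = exp(2πi Σ_j ρ_j(x) P_{ji}(x)). Then on each overlap U_{ij}, ĝ_{ji}^{-1} g_j ĝ_{ji} = g_i · exp(−2πi P_{ji}) = g_i; in particular the family {g_i} transforms equivariantly under conjugation by the lifts ĝ_{ji}.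 -/
open scoped Real

open Function

/-!
Conjugating by `ĝ_{ji}` and applying the cocycle relation to each term, the weights `ρ_k`
summing to one turn the exponent `Σ_k ρ_k P_{kj}` into `Σ_k ρ_k P_{ki} - P_{ji}`. The two parts
commute, so the exponential splits, and `exp(-2πi P) = 1 + (e^{-2πi} - 1) P = 1` for an
idempotent `P`.
-/

/-- The locally defined family `g_i(x) = exp(2πi Σ_j ρ_j(x) P_{ji}(x))`. -/
noncomputable def twistedExpFamily {H : Type*} [NormedAddCommGroup H]
    [InnerProductSpace ℂ H] [CompleteSpace H] {ι X : Type*}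
    (ρ : ι → X → ℝ) (P : ι → ι → X → (H →L[ℂ] H)) (i : ι) (x : X) :
    H →L[ℂ] H :=
  NormedSpace.exp ((2 * (Real.pi : ℂ) * Complex.I) • ∑ᶠ j, ρ j x • P j i x)

theorem mul_finsum_smul_mul_of_finsum_eq_one {ι R A : Type*} [Semiring R] [Ring A] [Module R A]
    [IsScalarTower R A A] [SMulCommClass R A A] {w : ι → R} (hw : ∑ᶠ k, w k = 1)
    {a b c : A} {f g : ι → A} (h : ∀ k, w k ≠ 0 → a * f k * b = g k - c) :
    a * (∑ᶠ k, w k • f k) * b = (∑ᶠ k, w k • g k) - c := by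
  have hfin : (support w).Finite := hasFiniteSupport_of_finsum_eq_one hw
  have hsupp (v : ι → A) : (support fun k => w k • v k) ⊆ hfin.toFinset := by
    simpa using support_smul_subset_left w v
  rw [finsum_eq_sum_of_support_subset _ (hsupp f), finsum_eq_sum_of_support_subset _ (hsupp g)]
  rw [finsum_eq_sum_of_support_subset w hfin.coe_toFinset.ge] at hw
  calc a * (∑ k ∈ hfin.toFinset, w k • f k) * b = ∑ k ∈ hfin.toFinset, w k • (g k - c) := by
        rw [Finset.mul_sum, Finset.sum_mul]
        refine Finset.sum_congr rfl fun k hk => ?_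
        rw [mul_smul_comm, smul_mul_assoc, h k (hfin.mem_toFinset.1 hk)]
    _ = (∑ k ∈ hfin.toFinset, w k • g k) - c := by
        rw [Finset.sum_congr rfl fun k _ => smul_sub (w k) (g k) c, Finset.sum_sub_distrib,
          ← Finset.sum_smul, hw, one_smul]

theorem Commute.finsum_left {ι A : Type*} [NonUnitalNonAssocSemiring A] {f : ι → A} {b : A}
    (h : ∀ k, Commute (f k) b) : Commute (∑ᶠ k, f k) b :=
  finsum_induction (Commute · b) (Commute.zero_left b) (fun _ _ => Commute.add_left) h

namespace NormedSpace

variable {𝔸 : Type*} [NormedRing 𝔸] [NormedAlgebra ℂ 𝔸] [CompleteSpace 𝔸]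

theorem exp_smul_of_isIdempotentElem (c : ℂ) {p : 𝔸} (hp : IsIdempotentElem p) :
    exp (c • p) = 1 + (Complex.exp c - 1) • p := by
  -- Since `p ^ n = p` for `n ≠ 0`, the series of `exp (c • p)` and of `Complex.exp c • p`
  -- differ only in their constant terms `1` and `p`.
  have hdiff := (exp_series_hasSum_exp' (𝕂 := ℂ) (c • p)).sub
    ((exp_series_hasSum_exp' (𝕂 := ℂ) c).smul_const p)
  have hterm (n : ℕ) (hn : n ≠ 0) :
      ((n.factorial : ℂ)⁻¹ • (c • p) ^ n) - ((n.factorial : ℂ)⁻¹ • c ^ n) • p = 0 := by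
    rw [smul_pow, hp.pow_eq hn, smul_smul, smul_eq_mul, sub_self]
  have hconst := hdiff.unique (hasSum_single 0 hterm)
  simp only [← Complex.exp_eq_exp_ℂ, Nat.factorial_zero, Nat.cast_one, inv_one, pow_zero,
    one_smul, sub_eq_iff_eq_add] at hconst
  rw [hconst, sub_smul, one_smul]
  abel

theorem exp_smul_eq_one_of_isIdempotentElem {c : ℂ} (hc : Complex.exp c = 1) {p : 𝔸}
    (hp : IsIdempotentElem p) : exp (c • p) = 1 := by
  rw [exp_smul_of_isIdempotentElem c hp, hc, sub_self, zero_smul, add_zero]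

theorem units_conj_exp_smul_of_conj_eq_sub (u : 𝔸ˣ) (c : ℂ) {a b p : 𝔸}
    (hconj : ↑u⁻¹ * a * u = b - p) (hbp : Commute b p) :
    ↑u⁻¹ * exp (c • a) * u = exp (c • b) * exp (-c • p) := by
  let : NormedAlgebra ℚ 𝔸 := .restrictScalars ℚ ℂ 𝔸
  rw [← exp_units_conj', mul_smul_comm, smul_mul_assoc, hconj, smul_sub, sub_eq_add_neg,
    ← neg_smul]
  exact exp_add_of_commute ((hbp.smul_left c).smul_right (-c))

end NormedSpace

theorem twisted_projection_family_equivariance_general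
    {H : Type*} [NormedAddCommGroup H] [InnerProductSpace ℂ H] [CompleteSpace H]
    {ι X : Type*}
    (U : ι → Set X)
    (gh : ι → ι → X → (H →L[ℂ] H)ˣ)
    (P : ι → ι → X → (H →L[ℂ] H))
    (hPproj : ∀ i j, ∀ x ∈ U i ∩ U j,
      IsIdempotentElem (P i j x) ∧ IsSelfAdjoint (P i j x))
    (hPcomm : ∀ a b i, ∀ x ∈ U a ∩ U b ∩ U i,
      P a i x * P b i x = P b i x * P a i x)
    (hPcocycle : ∀ i j k, ∀ x ∈ U i ∩ U j ∩ U k,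
      ((gh j k x)⁻¹ : (H →L[ℂ] H)ˣ) * P i j x * (gh j k x : H →L[ℂ] H)
        + P j k x = P i k x)
    (ρ : ι → X → ℝ)
    (hsum : ∀ x, ∑ᶠ k, ρ k x = 1)
    (hsupp : ∀ k x, ρ k x ≠ 0 → x ∈ U k) :
    ∀ i j, ∀ x ∈ U i ∩ U j,
      ((gh j i x)⁻¹ : (H →L[ℂ] H)ˣ) * twistedExpFamily ρ P j x
          * (gh j i x : H →L[ℂ] H)
        = twistedExpFamily ρ P i x
            * NormedSpace.exp ((-(2 * (Real.pi : ℂ) * Complex.I)) • P j i x)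
      ∧ ((gh j i x)⁻¹ : (H →L[ℂ] H)ˣ) * twistedExpFamily ρ P j x
          * (gh j i x : H →L[ℂ] H)
        = twistedExpFamily ρ P i x := by
  intro i j x ⟨hxi, hxj⟩
  unfold twistedExpFamily
  have hconj : ((gh j i x)⁻¹ : (H →L[ℂ] H)ˣ) * (∑ᶠ k, ρ k x • P k j x)
      * (gh j i x : H →L[ℂ] H) = (∑ᶠ k, ρ k x • P k i x) - P j i x :=
    mul_finsum_smul_mul_of_finsum_eq_one (hsum x) fun k hk =>
      eq_sub_of_add_eq (hPcocycle k j i x ⟨⟨hsupp k x hk, hxj⟩, hxi⟩)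
  have hcomm : Commute (∑ᶠ k, ρ k x • P k i x) (P j i x) := by
    refine Commute.finsum_left fun k => ?_
    by_cases hk : ρ k x = 0
    · simp [hk]
    · exact Commute.smul_left (hPcomm k j i x ⟨⟨hsupp k x hk, hxj⟩, hxi⟩) _
  have hequiv := NormedSpace.units_conj_exp_smul_of_conj_eq_sub (gh j i x)
    (2 * (Real.pi : ℂ) * Complex.I) hconj hcomm
  have hexp_one : NormedSpace.exp ((-(2 * (Real.pi : ℂ) * Complex.I)) • P j i x) = 1 :=
    NormedSpace.exp_smul_eq_one_of_isIdempotentElem (by simp [Complex.exp_neg])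
      (hPproj j i x ⟨hxj, hxi⟩).1
  exact ⟨hequiv, by rw [hequiv, hexp_one, mul_one]⟩

/-- Given unitary transition data `ĝ_{ij}` (lifts of `PU(H)`-transition
functions) over an open cover `{U_i}` and continuous families `P_{ij}` of finite-rank
orthogonal projections satisfying the twisted cocycle relation
`ĝ_{jk}⁻¹ P_{ij} ĝ_{jk} + P_{jk} = P_{ik}` on triple overlaps, with projections with
equal second index commuting pointwise, the family
`g_i(x) = exp(2πi Σ_j ρ_j(x) P_{ji}(x))` built from a subordinate partition of unity
`{ρ_j}` satisfies `ĝ_{ji}⁻¹ g_j ĝ_{ji} = g_i · exp(−2πi P_{ji}) = g_i` on each overlap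
`U_i ∩ U_j`; in particular `{g_i}` transforms equivariantly under conjugation by the
lifts `ĝ_{ji}`. -/
theorem twisted_projection_family_equivariance
    {H : Type*} [NormedAddCommGroup H] [InnerProductSpace ℂ H] [CompleteSpace H]
    {ι X : Type*} [TopologicalSpace X]
    (U : ι → Set X) (hUopen : ∀ i, IsOpen (U i))
    (gh : ι → ι → X → (H →L[ℂ] H)ˣ)
    (ghcont : ∀ i j, ContinuousOn (fun x => (gh i j x : H →L[ℂ] H)) (U i ∩ U j))
    (ghunitary : ∀ i j, ∀ x ∈ U i ∩ U j,
      (gh i j x : H →L[ℂ] H) ∈ unitary (H →L[ℂ] H))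
    (P : ι → ι → X → (H →L[ℂ] H))
    (hPcont : ∀ i j, ContinuousOn (fun x => P i j x) (U i ∩ U j))
    (hPproj : ∀ i j, ∀ x ∈ U i ∩ U j,
      IsIdempotentElem (P i j x) ∧ IsSelfAdjoint (P i j x))
    (hPfinrank : ∀ i j, ∀ x ∈ U i ∩ U j,
      FiniteDimensional ℂ (LinearMap.range ((P i j x : H →ₗ[ℂ] H))))
    (hPcomm : ∀ a b i, ∀ x ∈ U a ∩ U b ∩ U i,
      P a i x * P b i x = P b i x * P a i x)
    (hPcocycle : ∀ i j k, ∀ x ∈ U i ∩ U j ∩ U k,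
      ((gh j k x)⁻¹ : (H →L[ℂ] H)ˣ) * P i j x * (gh j k x : H →L[ℂ] H)
        + P j k x = P i k x)
    (ρ : ι → X → ℝ)
    (hfin : ∀ x, (Function.support fun k => ρ k x).Finite)
    (hnonneg : ∀ k x, 0 ≤ ρ k x)
    (hsum : ∀ x, ∑ᶠ k, ρ k x = 1)
    (hsupp : ∀ k x, ρ k x ≠ 0 → x ∈ U k) :
    ∀ i j, ∀ x ∈ U i ∩ U j,
      ((gh j i x)⁻¹ : (H →L[ℂ] H)ˣ) * twistedExpFamily ρ P j x
          * (gh j i x : H →L[ℂ] H)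
        = twistedExpFamily ρ P i x
            * NormedSpace.exp ((-(2 * (Real.pi : ℂ) * Complex.I)) • P j i x)
      ∧ ((gh j i x)⁻¹ : (H →L[ℂ] H)ˣ) * twistedExpFamily ρ P j x
          * (gh j i x : H →L[ℂ] H)
        = twistedExpFamily ρ P i x :=
  twisted_projection_family_equivariance_general U gh P hPproj hPcomm hPcocycle ρ hsum hsupp
end
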